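/- arXiv:2308.10456 — 5 statements merged into one kernel-verified Lean document; each statement's English description precedes it below -/
import Mathlib

section
/- Let P be a poset on [n], let (u,v) be an incomparable pair of P with u < v (in the usual order on integers), and suppose γ ∈ Σ_R(P_{(v,u)}) and i ∈ [n-1] with i not a right descent of γ and γs_i ∈ Σ_R(P). Then γs_i ∈ Σ_R(P_{(v,u)}). In other words, the span of Σ_R(P_{(v,u)}) is closed under the 0-Hecke action defining the module M_P. -/
open Equiv

/-- Coxeter length of a permutation = number of inversions. -/
def len {n : ℕ} (σ : Perm (Fin n)) : ℕ :=
  (Finset.univ.filter fun p : Fin n × Fin n => p.1 < p.2 ∧ σ p.2 < σ p.1).card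

/-- The simple transposition `s_i = (i, i+1)` (0-indexed). -/
def simpleT {n : ℕ} (i : ℕ) (h : i + 1 < n) : Perm (Fin n) :=
  Equiv.swap ⟨i, Nat.lt_of_succ_lt h⟩ ⟨i + 1, h⟩

/-- `Σ_R(P)`: linear extensions of a partial order `P` on `[n]`. -/
def SigmaR {n : ℕ} (P : PartialOrder (Fin n)) : Set (Perm (Fin n)) :=
  {γ | ∀ i j : Fin n, P.lt i j → γ⁻¹ i < γ⁻¹ j}

/-!
Write `σ = γ s_i`. Since `γ` is a linear extension of `P_{(v,u)}`, the value `v` comes before `u`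
in `γ`. As `i` is an ascent of `γ` and `u < v`, the swap `s_i` cannot exchange these two
positions, so `(v,u)` is still an inversion of `σ`: `γ ≤_R σ`. Every relation of
`P_{(v,u)}` not already in `P` factors as `a ≼ v ≺ u ≼ b` with `a ≼_P v` and `u ≼_P b`, so a
linear extension of `P` with `v` before `u` is one of `P_{(v,u)}`.
-/

section SimpleTransposition

variable {n i : ℕ} (h : i + 1 < n)

theorem simpleT_lt_simpleT {p q : Fin n} (hpq : p < q)
    (hne : ¬ (p = ⟨i, Nat.lt_of_succ_lt h⟩ ∧ q = ⟨i + 1, h⟩)) :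
    simpleT i h p < simpleT i h q := by
  obtain ⟨p, hp⟩ := p
  obtain ⟨q, hq⟩ := q
  simp only [not_and, Fin.mk.injEq] at hne
  rw [Fin.mk_lt_mk] at hpq
  simp only [simpleT, swap_apply_def]
  split_ifs <;> simp_all only [Fin.mk.injEq, Fin.mk_lt_mk, true_implies] <;> omega

theorem len_mul_simpleT_lt {γ : Perm (Fin n)}
    (hdesc : γ ⟨i + 1, h⟩ < γ ⟨i, Nat.lt_of_succ_lt h⟩) :
    len (γ * simpleT i h) < len γ := by
  classical
  set s := simpleT i h
  set ascent : Fin n × Fin n := (⟨i, Nat.lt_of_succ_lt h⟩, ⟨i + 1, h⟩)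
  have hs₁ : s ascent.1 = ascent.2 := swap_apply_left _ _
  have hs₂ : s ascent.2 = ascent.1 := swap_apply_right _ _
  have hascent : ascent.1 < ascent.2 := Fin.mk_lt_mk.2 i.lt_succ_self
  -- `s × s` maps the inversions of `γ s` injectively to those of `γ` other than `(i, i+1)`.
  have hmaps : ∀ p : Fin n × Fin n, p.1 < p.2 ∧ (γ * s) p.2 < (γ * s) p.1 →
      (s p.1, s p.2) ≠ ascent ∧ s p.1 < s p.2 ∧ γ (s p.2) < γ (s p.1) := by
    rintro ⟨p₁, p₂⟩ ⟨hlt, hinv⟩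
    have hne : ¬ (p₁ = ascent.1 ∧ p₂ = ascent.2) := by
      rintro ⟨rfl, rfl⟩
      exact hdesc.not_gt (by simpa only [Perm.mul_apply, hs₁, hs₂] using hinv)
    refine ⟨fun heq => ?_, simpleT_lt_simpleT h hlt hne, hinv⟩
    have e₁ : p₁ = ascent.2 := s.injective (by rw [hs₂]; exact congrArg Prod.fst heq)
    have e₂ : p₂ = ascent.1 := s.injective (by rw [hs₁]; exact congrArg Prod.snd heq)
    exact hascent.not_gt (e₁ ▸ e₂ ▸ hlt)
  calc len (γ * s)
      ≤ ((Finset.univ.filter fun p : Fin n × Fin n => p.1 < p.2 ∧ γ p.2 < γ p.1).erase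
          ascent).card := by
        refine Finset.card_le_card_of_injOn (fun p => (s p.1, s p.2)) (fun p hp => ?_) ?_
        · obtain ⟨hne, hlt, hinv⟩ := hmaps p (Finset.mem_filter.1 hp).2
          simpa [hne] using ⟨hlt, hinv⟩
        · rintro ⟨p₁, p₂⟩ - ⟨q₁, q₂⟩ - heq
          simpa only [Prod.mk.injEq, s.injective.eq_iff] using heq
    _ < len γ := Finset.card_erase_lt_of_mem (by simpa using ⟨hascent, hdesc⟩)

theorem inv_mul_simpleT_lt_of_inv_lt {γ : Perm (Fin n)}
    (hnd : ¬ len (γ * simpleT i h) < len γ) {x y : Fin n} (hyx : y < x)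
    (hxy : γ⁻¹ x < γ⁻¹ y) :
    (γ * simpleT i h)⁻¹ x < (γ * simpleT i h)⁻¹ y := by
  rw [mul_inv_rev, simpleT, swap_inv, ← simpleT, Perm.mul_apply, Perm.mul_apply]
  refine simpleT_lt_simpleT h hxy fun ⟨hx, hy⟩ => hnd (len_mul_simpleT_lt h ?_)
  simpa [← hx, ← hy] using hyx

end SimpleTransposition

theorem le_or_le_and_le_of_reflTransGen {α : Type*} [Preorder α] {u v : α} (huv : ¬ u ≤ v)
    {a b : α} (hab : Relation.ReflTransGen (fun x y => x ≤ y ∨ (x = v ∧ y = u)) a b) :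
    a ≤ b ∨ (a ≤ v ∧ u ≤ b) := by
  induction hab with
  | refl => exact Or.inl le_rfl
  | tail _ hstep ih =>
    rcases ih, hstep with ⟨hab | ⟨hav, hub⟩, hbc | ⟨rfl, rfl⟩⟩
    · exact Or.inl (hab.trans hbc)
    · exact Or.inr ⟨hab, le_rfl⟩
    · exact Or.inr ⟨hav, hub.trans hbc⟩
    · exact absurd hub huv

section LinearExtension

variable {n : ℕ} (P Pvu : PartialOrder (Fin n)) {u v : Fin n}
  (hvu : ∀ a b : Fin n, Pvu.le a b ↔
    Relation.ReflTransGen (fun x y => P.le x y ∨ (x = v ∧ y = u)) a b)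
  {σ : Perm (Fin n)}

include hvu in
theorem inv_lt_of_mem_sigmaR (hne : v ≠ u) (hσ : σ ∈ SigmaR Pvu) : σ⁻¹ v < σ⁻¹ u := by
  have hle : Pvu.le v u := (hvu v u).2 (.single (Or.inr ⟨rfl, rfl⟩))
  exact hσ v u (@lt_of_le_of_ne _ Pvu _ _ hle hne)

theorem inv_le_inv_of_mem_sigmaR (hσ : σ ∈ SigmaR P) {a b : Fin n} (hab : P.le a b) :
    σ⁻¹ a ≤ σ⁻¹ b := by
  obtain rfl | hne := eq_or_ne a b
  · exact Fin.le_refl _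
  · exact Fin.le_of_lt (hσ a b (@lt_of_le_of_ne _ P _ _ hab hne))

include hvu in
theorem mem_sigmaR_of_inv_lt (hinc : ¬ P.le u v) (hσ : σ ∈ SigmaR P)
    (hvu_inv : σ⁻¹ v < σ⁻¹ u) : σ ∈ SigmaR Pvu := by
  intro a b hab
  rcases @le_or_le_and_le_of_reflTransGen _ P.toPreorder _ _ hinc _ _
      ((hvu a b).1 (@le_of_lt _ Pvu.toPreorder _ _ hab)) with hle | ⟨hav, hub⟩
  · exact hσ a b (@lt_of_le_of_ne _ P _ _ hle (@ne_of_lt _ Pvu.toPreorder _ _ hab))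
  · exact Fin.lt_of_le_of_lt (inv_le_inv_of_mem_sigmaR P hσ hav)
      (Fin.lt_of_lt_of_le hvu_inv (inv_le_inv_of_mem_sigmaR P hσ hub))

end LinearExtension

/-- Let `(u,v)` be an incomparable pair of `P` with `u < v`, let `P_{(v,u)}` be the
partial order generated by `P` together with `v ≺ u`.  If `γ ∈ Σ_R(P_{(v,u)})`,
`i` is not a right descent of `γ`, and `γ s_i ∈ Σ_R(P)`, then
`γ s_i ∈ Σ_R(P_{(v,u)})`; i.e. the span of `Σ_R(P_{(v,u)})` is closed under the
0-Hecke action defining `M_P`. -/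
theorem sigmaR_sub_closed {n : ℕ} (P Pvu : PartialOrder (Fin n)) (u v : Fin n)
    (huv : u < v)
    (hinc : ¬ P.le u v ∧ ¬ P.le v u)
    (hvu : ∀ a b : Fin n, Pvu.le a b ↔
      Relation.ReflTransGen (fun x y => P.le x y ∨ (x = v ∧ y = u)) a b)
    (γ : Perm (Fin n)) (hγ : γ ∈ SigmaR Pvu)
    (i : ℕ) (h : i + 1 < n)
    (hnd : ¬ (len (γ * simpleT i h) < len γ))
    (hmem : γ * simpleT i h ∈ SigmaR P) :
    γ * simpleT i h ∈ SigmaR Pvu := by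
  have hγvu : γ⁻¹ v < γ⁻¹ u := inv_lt_of_mem_sigmaR P Pvu hvu (Fin.ne_of_gt huv) hγ
  exact mem_sigmaR_of_inv_lt P Pvu hvu hinc.1 hmem
    (inv_mul_simpleT_lt_of_inv_lt h hnd huv hγvu)
end

section
/- Let D be a finite subset of ℕ² of size n and let P_D be the poset on [n] defined by i ⪯ j iff x_i ≤ x_j and y_i ≤ y_j, where (x_i, y_i) is the i-th element of D enumerated along rows from left to right starting with the uppermost row. Then P_D is regular: there is no triple (u,v,w) with v ⪯ w, (u,v) and (u,w) both incomparable pairs, and either w < u < v or v < u < w (in the usual integer order). -/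
/-- Let `D` be an `n`-element subset of `ℕ²` and `e : Fin n → ℕ × ℕ` its
row-reading enumeration: boxes listed row by row from the top (largest `y`)
down, within a row by increasing `x`.  The canonical poset `P_D` on `[n]` is
given by `i ⪯ j ↔ x_i ≤ x_j ∧ y_i ≤ y_j`.  Then `P_D` is regular: there is no
triple `(u,v,w)` with `v ⪯ w`, `u` incomparable to both `v` and `w`, and
`w < u < v` or `v < u < w`. -/
theorem canonical_poset_regular {n : ℕ} (D : Finset (ℕ × ℕ)) (hcard : D.card = n)
    (e : Fin n → ℕ × ℕ) (hmem : ∀ i, e i ∈ D) (hinj : Function.Injective e)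
    (horder : ∀ i j : Fin n,
      i < j ↔ ((e j).2 < (e i).2 ∨ ((e i).2 = (e j).2 ∧ (e i).1 < (e j).1))) :
    ¬ ∃ u v w : Fin n,
        ((e v).1 ≤ (e w).1 ∧ (e v).2 ≤ (e w).2) ∧
        (¬ ((e u).1 ≤ (e v).1 ∧ (e u).2 ≤ (e v).2) ∧
          ¬ ((e v).1 ≤ (e u).1 ∧ (e v).2 ≤ (e u).2)) ∧
        (¬ ((e u).1 ≤ (e w).1 ∧ (e u).2 ≤ (e w).2) ∧
          ¬ ((e w).1 ≤ (e u).1 ∧ (e w).2 ≤ (e u).2)) ∧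
        ((w < u ∧ u < v) ∨ (v < u ∧ u < w)) := by
  rintro ⟨u, v, w, ⟨hvw1, hvw2⟩, ⟨huv1, huv2⟩, ⟨huw1, huw2⟩, hcase⟩
  rcases hcase with ⟨h1, h2⟩ | ⟨h1, h2⟩ <;>
    [have a1 := (horder w u).mp h1; have a1 := (horder v u).mp h1] <;>
    [have a2 := (horder u v).mp h2; have a2 := (horder u w).mp h2] <;>
  omega
end

section
/- Let D ∈ 𝔇_n be a diagram with n boxes and no empty rows or columns, and let T be the standard tableau on D filled by reading integers 1,...,n along columns from bottom to top starting with the leftmost column. Let read(T) be the word obtained by reading entries of T along rows right to left starting with the lowermost row, viewed as a permutation in S_n. Then w_0 · read(T)⁻¹ is a minimal element of Σ_R(P_D) with respect to right weak order, i.e., w_0·read(T)⁻¹ · s_i ∉ Σ_R(P_D) for every right descent i of w_0·read(T)⁻¹. -/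
open Equiv

/-- `e` enumerates boxes along the rows from left to right (increasing `x`),
starting with the uppermost row (decreasing `y`): the row-reading enumeration
defining the labeling of the canonical poset `P_D`. -/
def RowEnum {n : ℕ} (e : Fin n → ℕ × ℕ) : Prop :=
  ∀ i j : Fin n, i < j ↔ ((e j).2 < (e i).2 ∨ ((e i).2 = (e j).2 ∧ (e i).1 < (e j).1))

/-- `t` enumerates boxes along the columns from bottom to top, starting with the
leftmost column: the filling order of the sink standard tableau. -/
def ColEnum {n : ℕ} (t : Fin n → ℕ × ℕ) : Prop :=
  ∀ i j : Fin n, i < j ↔ ((t i).1 < (t j).1 ∨ ((t i).1 = (t j).1 ∧ (t i).2 < (t j).2))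

/-- `r` enumerates boxes along the rows from right to left (decreasing `x`),
starting with the lowermost row (increasing `y`): the reading order of `read`. -/
def ReadEnum {n : ℕ} (r : Fin n → ℕ × ℕ) : Prop :=
  ∀ i j : Fin n, i < j ↔ ((r i).2 < (r j).2 ∨ ((r i).2 = (r j).2 ∧ (r j).1 < (r i).1))

/-- Membership in `𝔇_n`: no empty rows or columns. -/
def DiagOK (D : Finset (ℕ × ℕ)) : Prop :=
  (∃ l, D.image Prod.fst = Finset.Icc 1 l) ∧ (∃ k, D.image Prod.snd = Finset.Icc 1 k)

/-- `Σ_R(P_D)` for the canonical poset `P_D` (labeled via the row-reading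
enumeration `e`): `i ≺ j` iff `x_i ≤ x_j`, `y_i ≤ y_j` and `i ≠ j`. -/
def SigmaRD {n : ℕ} (e : Fin n → ℕ × ℕ) : Set (Perm (Fin n)) :=
  {γ | ∀ i j : Fin n,
    ((e i).1 ≤ (e j).1 ∧ (e i).2 ≤ (e j).2 ∧ i ≠ j) → γ⁻¹ i < γ⁻¹ j}

/-!
Write `γ = w₀ w⁻¹`. A right descent of `γ` at `i` means that the entry `i` of `T` precedes `i + 1`
in `read(T)`. The boxes of these two consecutive entries are then met in the same order by the
column filling order and by the row reading order, which forces the box of `i` to lie weakly left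
of and strictly below the box of `i + 1`: their labels are comparable in `P_D`. The row-reading
labelling of `P_D` is the reading order reversed, so `γ⁻¹` sends these two labels to `i` and
`i + 1`, and right multiplication by `sᵢ` swaps them, violating the defining condition of
`Σ_R(P_D)`.
-/

section SimpleTransposition

variable {n i : ℕ} (hi : i + 1 < n)

lemma simpleT_lt_simpleT_s10 {x y : Fin n} (hxy : x < y)
    (hne : ¬(x = ⟨i, Nat.lt_of_succ_lt hi⟩ ∧ y = ⟨i + 1, hi⟩)) :
    simpleT i hi x < simpleT i hi y := by
  simp only [simpleT, swap_apply_def]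
  rw [Fin.lt_def] at hxy ⊢
  simp only [Fin.ext_iff, not_and] at hne
  split_ifs <;> simp only [Fin.ext_iff] at * <;> omega

lemma len_le_len_mul_simpleT (u : Perm (Fin n))
    (hu : u ⟨i, Nat.lt_of_succ_lt hi⟩ < u ⟨i + 1, hi⟩) :
    len u ≤ len (u * simpleT i hi) := by
  -- `(x, y) ↦ (sᵢ x, sᵢ y)` maps the inversions of `u` into those of `u sᵢ`, as `(i, i + 1)` is
  -- not one of them.
  have hs : ∀ x, (u * simpleT i hi) (simpleT i hi x) = u x := fun x => by
    simp [simpleT, swap_apply_self]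
  refine Finset.card_le_card_of_injOn (fun p => (simpleT i hi p.1, simpleT i hi p.2)) ?_ ?_
  · rintro ⟨x, y⟩ hxy
    simp only [Finset.coe_filter, Finset.mem_univ, true_and, Set.mem_ofPred_eq, hs] at hxy ⊢
    refine ⟨simpleT_lt_simpleT_s10 hi hxy.1 ?_, hxy.2⟩
    rintro ⟨rfl, rfl⟩
    exact lt_asymm hu hxy.2
  · intro p _ q _ hpq
    simp only [Prod.mk.injEq, EmbeddingLike.apply_eq_iff_eq] at hpq
    exact Prod.ext hpq.1 hpq.2

lemma apply_succ_lt_of_len_mul_simpleT_lt (u : Perm (Fin n))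
    (h : len (u * simpleT i hi) < len u) :
    u ⟨i + 1, hi⟩ < u ⟨i, Nat.lt_of_succ_lt hi⟩ := by
  by_contra! hle
  have hne : u ⟨i, Nat.lt_of_succ_lt hi⟩ ≠ u ⟨i + 1, hi⟩ := by simp [Fin.ext_iff]
  exact (len_le_len_mul_simpleT hi u (lt_of_le_of_ne hle hne)).not_gt h

end SimpleTransposition

def rowKey (b : ℕ × ℕ) : ℕᵒᵈ ×ₗ ℕ := toLex (OrderDual.toDual b.2, b.1)

lemma rowKey_injective : Function.Injective rowKey := by
  rintro ⟨x, y⟩ ⟨x', y'⟩ h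
  simpa [rowKey, and_comm] using h

lemma rowKey_lt_rowKey {b c : ℕ × ℕ} :
    rowKey b < rowKey c ↔ c.2 < b.2 ∨ (b.2 = c.2 ∧ b.1 < c.1) := by
  simp [rowKey, Prod.Lex.toLex_lt_toLex]

variable {n : ℕ}

lemma RowEnum.strictMono_rowKey {e : Fin n → ℕ × ℕ} (he : RowEnum e) :
    StrictMono (rowKey ∘ e) :=
  fun i j hij => rowKey_lt_rowKey.2 ((he i j).1 hij)

lemma ReadEnum.strictMono_rowKey_rev {r : Fin n → ℕ × ℕ} (hr : ReadEnum r) :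
    StrictMono (rowKey ∘ r ∘ Fin.rev) := fun _ _ hij =>
  rowKey_lt_rowKey.2 (((hr _ _).1 (Fin.rev_lt_rev.2 hij)).imp_right fun h => ⟨h.1.symm, h.2⟩)

lemma RowEnum.eq_comp_rev {e r : Fin n → ℕ × ℕ} (he : RowEnum e) (hr : ReadEnum r)
    (hrange : Set.range e = Set.range r) : e = r ∘ Fin.rev := by
  have hrange' : Set.range (rowKey ∘ e) = Set.range (rowKey ∘ r ∘ Fin.rev) := by
    rw [Set.range_comp, Set.range_comp, hrange, Set.range_comp, Fin.rev_surjective.range_eq,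
      Set.image_univ]
  have := (he.strictMono_rowKey.range_inj hr.strictMono_rowKey_rev).1 hrange'
  exact rowKey_injective.comp_left this

lemma inv_revPerm_mul_inv_mul_apply (w σ : Perm (Fin n)) (x : Fin n) :
    (Fin.revPerm * w⁻¹ * σ : Perm (Fin n))⁻¹ x = σ⁻¹ (w (Fin.rev x)) := by
  simp [mul_inv_rev]

theorem sink_reading_word_minimal_general {n : ℕ} (D : Finset (ℕ × ℕ))
    (e t r : Fin n → ℕ × ℕ)
    (he : RowEnum e) (hre : Set.range e = ↑D)
    (ht : ColEnum t)
    (hr : ReadEnum r) (hrr : Set.range r = ↑D)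
    (w : Perm (Fin n)) (hw : ∀ p : Fin n, t (w p) = r p)
    (i : ℕ) (hi : i + 1 < n)
    (hdesc : len ((Fin.revPerm * w⁻¹) * simpleT i hi) < len (Fin.revPerm * w⁻¹)) :
    (Fin.revPerm * w⁻¹) * simpleT i hi ∉ SigmaRD e := by
  intro hmem
  obtain ⟨p, hp⟩ := w.surjective ⟨i, Nat.lt_of_succ_lt hi⟩
  obtain ⟨q, hq⟩ := w.surjective ⟨i + 1, hi⟩
  have hpq : p < q := by
    simpa [← hp, ← hq] using apply_succ_lt_of_len_mul_simpleT_lt hi _ hdesc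
  have hlabel : ∀ p, e (Fin.rev p) = t (w p) := fun p => by
    rw [he.eq_comp_rev hr (hre.trans hrr.symm), Function.comp_apply, Fin.rev_rev, hw]
  have hcomparable : (t (w p)).1 ≤ (t (w q)).1 ∧ (t (w p)).2 < (t (w q)).2 := by
    have hcol := (ht (w p) (w q)).1 (by rw [hp, hq]; exact Fin.lt_def.2 (Nat.lt_succ_self i))
    have hrow := (hr p q).1 hpq
    rw [← hw, ← hw] at hrow
    omega
  have hswap := hmem (Fin.rev p) (Fin.rev q)
    ⟨by rw [hlabel, hlabel]; exact hcomparable.1, by rw [hlabel, hlabel]; exact hcomparable.2.le,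
      by simpa using hpq.ne⟩
  rw [inv_revPerm_mul_inv_mul_apply, inv_revPerm_mul_inv_mul_apply, Fin.rev_rev, Fin.rev_rev, hp,
    hq] at hswap
  simp [simpleT, Fin.lt_def] at hswap

/-- Let `D ∈ 𝔇_n`, let `T` be the sink standard tableau of `D` (filled along
columns bottom-to-top, leftmost column first, i.e. value `k` sits in box `t k`),
and let `w = read(T)` (reading along rows right-to-left from the lowermost row,
i.e. `t (w p) = r p`).  Then `w₀ w⁻¹` is minimal in `Σ_R(P_D)` for the right
weak order: `(w₀ w⁻¹) sᵢ ∉ Σ_R(P_D)` for every right descent `i` of `w₀ w⁻¹`. -/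
theorem sink_reading_word_minimal {n : ℕ} (D : Finset (ℕ × ℕ)) (hcard : D.card = n)
    (hD : DiagOK D)
    (e t r : Fin n → ℕ × ℕ)
    (he : RowEnum e) (hre : Set.range e = ↑D)
    (ht : ColEnum t) (hrt : Set.range t = ↑D)
    (hr : ReadEnum r) (hrr : Set.range r = ↑D)
    (w : Perm (Fin n)) (hw : ∀ p : Fin n, t (w p) = r p)
    (i : ℕ) (hi : i + 1 < n)
    (hdesc : len ((Fin.revPerm * w⁻¹) * simpleT i hi) < len (Fin.revPerm * w⁻¹)) :
    (Fin.revPerm * w⁻¹) * simpleT i hi ∉ SigmaRD e :=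
  sink_reading_word_minimal_general D e t r he hre ht hr hrr w hw i hi hdesc
end

section
/- Let α be a composition of n and ρ ∈ S_n with w_0(α) ≤_L ρ. Then the diagram D_{α;ρ} produced by the paper's algorithm lies in 𝔇_n, and its source tableau reading word equals w_0(α) and its sink tableau reading word equals ρ; consequently Σ_R(P_{D_{α;ρ}}) = {w_0γ⁻¹ : γ ∈ [w_0(α), ρ]_L}. -/
open Equiv

/-- Finset.filter with classical decidability. -/
noncomputable def cfilter {α : Type*} (p : α → Prop) (s : Finset α) : Finset α :=
  @Finset.filter α p (fun _ => Classical.propDecidable _) s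

/-- Covering relation of the left weak Bruhat order. -/
def leftCov {n : ℕ} (σ τ : Perm (Fin n)) : Prop :=
  ∃ i, ∃ h : i + 1 < n, τ = simpleT i h * σ ∧ len σ < len τ

/-- The left weak Bruhat order. -/
def leftWeakLe {n : ℕ} : Perm (Fin n) → Perm (Fin n) → Prop :=
  Relation.ReflTransGen leftCov

/-- The left weak Bruhat interval `[σ,ρ]_L`. -/
def leftInterval {n : ℕ} (σ ρ : Perm (Fin n)) : Set (Perm (Fin n)) :=
  {γ | leftWeakLe σ γ ∧ leftWeakLe γ ρ}

/-- `set(β)`: the partial sums `β₁, β₁+β₂, …` omitting the total sum (1-based values). -/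
def psums (β : List ℕ) : Finset ℕ :=
  (Finset.range (β.length - 1)).image fun j => (β.take (j + 1)).sum

/-- The simple transpositions `{s_i : i ∈ S}` (with `i` 1-based, so `s_i` swaps
the 0-based positions `i-1` and `i`). -/
def genSet (n : ℕ) (S : Finset ℕ) : Set (Perm (Fin n)) :=
  {g | ∃ i ∈ S, ∃ h : i < n, g = Equiv.swap ⟨i - 1, by omega⟩ ⟨i, h⟩}

/-- `g` is the longest element of the subgroup generated by `S`. -/
def IsLongest {n : ℕ} (S : Set (Perm (Fin n))) (g : Perm (Fin n)) : Prop :=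
  g ∈ Subgroup.closure S ∧ ∀ h ∈ Subgroup.closure S, len h ≤ len g

/-- The left descent set `Des_L(ρ) = {i ∈ [n-1] : ℓ(s_i ρ) < ℓ(ρ)}` (1-based). -/
noncomputable def DesL {n : ℕ} (ρ : Perm (Fin n)) : Finset ℕ :=
  cfilter (fun i => ∃ h' : i - 1 < n, ∃ h : i < n,
    len (Equiv.swap ⟨i - 1, h'⟩ ⟨i, h⟩ * ρ) < len ρ) (Finset.Ioo 0 n)

/-- The diagram `D_{α;ρ}` produced by the algorithm, for a composition `α` of `n`
with `set(α) = S`: a box `(i,j)` belongs to `D_{α;ρ}` iff `R_j ∩ C_i ≠ ∅`, i.e.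
iff there is a (1-based) position `r` whose block in the `set(α^c)`-partition of
`[n]` is `j` and such that the block of the value `ρ(r)` in the
`Des_L(ρ)`-partition of `[n]` is `i`. -/
noncomputable def Dalg {n : ℕ} (S : Finset ℕ) (ρ : Perm (Fin n)) : Finset (ℕ × ℕ) :=
  Finset.image (fun p : Fin n =>
    (1 + ((DesL ρ).filter fun k => k < (ρ p : ℕ) + 1).card,
     1 + (((Finset.Icc 1 (n - 1)) \ S).filter fun z => z < (p : ℕ) + 1).card))
    Finset.univ

/-- Filling order of the source standard tableau: rows bottom to top, left to right. -/
def SrcEnum {n : ℕ} (u : Fin n → ℕ × ℕ) : Prop :=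
  ∀ i j : Fin n, i < j ↔ ((u i).2 < (u j).2 ∨ ((u i).2 = (u j).2 ∧ (u i).1 < (u j).1))

/-!
Write `Inv σ` for the set of position pairs `p < q` with `σ q < σ p`. It determines `σ`, and
`σ ≤_L τ` iff `Inv σ ⊆ Inv τ`: a left cover adds one pair, and a pair in `Inv τ \ Inv σ` produces
a left descent of `τ` whose pair lies outside `Inv σ`, so that undoing it stays above `σ`.

The inversions of `w₀(α)` are the pairs of positions in a common block cut out by `set(α^c)`,
i.e. in a common row of `D_{α;ρ}`, so `w₀(α) ≤_L ρ` sends the positions of a row to strictly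
decreasing columns. Hence the map `p ↦ box p` is injective, the row, reading, source and sink
enumerations of the diagram are `box` composed with `rev`, `id`, `w₀(α)` and `ρ⁻¹`, and for
`p < q` we have `box p ≤ box q ↔ ρ p < ρ q` and `box q ≤ box p ↔ (p, q) ∈ Inv w₀(α)`. So the
linear extensions of `P_D` are the `δ` with `Inv w₀(α) ⊆ Inv δ ⊆ Inv ρ`, i.e. `[w₀(α), ρ]_L`.
-/

lemma Fin.exists_adjacent_lt {n : ℕ} {α : Type*} [LinearOrder α] (f : Fin n → α) {p q : Fin n}
    (hpq : p ≤ q) (h : f q < f p) :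
    ∃ A B : Fin n, (A : ℕ) + 1 = B ∧ p ≤ A ∧ B ≤ q ∧ f B < f A := by
  obtain ⟨q, hq⟩ := q
  induction q with
  | zero =>
    obtain rfl : p = ⟨0, hq⟩ := Fin.ext (Nat.le_zero.1 hpq)
    exact absurd h (lt_irrefl _)
  | succ k ih =>
    have hpk : p ≤ ⟨k, by omega⟩ := by
      refine Fin.le_def.2 (Nat.le_of_lt_succ (lt_of_le_of_ne hpq fun hp => ?_))
      rw [show p = ⟨k + 1, hq⟩ from Fin.ext hp] at h
      exact lt_irrefl _ h
    by_cases hk : f ⟨k + 1, hq⟩ < f ⟨k, by omega⟩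
    · exact ⟨_, _, rfl, hpk, le_rfl, hk⟩
    · obtain ⟨A, B, hAB, hA, hB, hBA⟩ := ih (by omega) hpk (lt_of_le_of_lt (not_lt.1 hk) h)
      exact ⟨A, B, hAB, hA, hB.trans (Fin.le_def.2 k.le_succ), hBA⟩

namespace AlgorithmDiagram

open Finset OrderDual

variable {n : ℕ}

def invSet (σ : Perm (Fin n)) : Finset (Fin n × Fin n) :=
  univ.filter fun x => x.1 < x.2 ∧ σ x.2 < σ x.1

lemma len_eq_card_invSet (σ : Perm (Fin n)) : len σ = #(invSet σ) := rfl

@[simp]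
lemma mem_invSet {σ : Perm (Fin n)} {x : Fin n × Fin n} :
    x ∈ invSet σ ↔ x.1 < x.2 ∧ σ x.2 < σ x.1 := by
  simp [invSet]

lemma len_inv (σ : Perm (Fin n)) : len σ⁻¹ = len σ := by
  refine card_nbij' (fun x => (σ⁻¹ x.2, σ⁻¹ x.1)) (fun x => (σ x.2, σ x.1)) ?_ ?_ ?_ ?_ <;>
    intro x hx <;> simp_all

lemma eq_of_invSet_eq {σ τ : Perm (Fin n)} (h : invSet σ = invSet τ) : σ = τ := by
  have hlt : ∀ p q, σ p < σ q ↔ τ p < τ q := by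
    intro p q
    rcases lt_trichotomy p q with hpq | rfl | hpq
    · rw [← (σ.injective.ne hpq.ne).le_iff_lt, ← (τ.injective.ne hpq.ne).le_iff_lt]
      simpa [hpq] using (Iff.of_eq (congrArg ((p, q) ∈ ·) h)).not
    · simp
    · simpa [hpq] using congrArg ((q, p) ∈ ·) h
  have hmono : StrictMono (σ * τ⁻¹) := fun a b hab => by simpa [hlt] using hab
  have : σ * τ⁻¹ = 1 := by
    ext1 a
    exact congrFun ((hmono.range_inj strictMono_id).1 (by simp)) a
  exact mul_inv_eq_one.1 this

lemma swap_lt_swap_iff {A B x y : Fin n} (hAB : (A : ℕ) + 1 = B)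
    (hxy : ¬(x = A ∧ y = B)) (hyx : ¬(x = B ∧ y = A)) :
    swap A B x < swap A B y ↔ x < y := by
  simp only [swap_apply_def, Fin.ext_iff, Fin.lt_def] at *
  split_ifs <;> omega

lemma invSet_swap_mul {A B : Fin n} (hAB : (A : ℕ) + 1 = B) {σ : Perm (Fin n)}
    (h : σ⁻¹ A < σ⁻¹ B) :
    invSet (swap A B * σ) = insert (σ⁻¹ A, σ⁻¹ B) (invSet σ) := by
  ext ⟨p, q⟩
  simp only [mem_insert, mem_invSet, Prod.mk.injEq, Perm.mul_apply]
  by_cases hpq : p = σ⁻¹ A ∧ q = σ⁻¹ B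
  · obtain ⟨rfl, rfl⟩ := hpq
    refine iff_of_true ⟨h, ?_⟩ (.inl ⟨rfl, rfl⟩)
    simpa using Fin.lt_def.2 (by omega : (A : ℕ) < B)
  rw [or_iff_right hpq]
  by_cases hqp : σ q = A ∧ σ p = B
  · have : q < p := by simpa [← hqp.1, ← hqp.2] using h
    simp [this.not_gt]
  rw [swap_lt_swap_iff hAB hqp]
  rintro ⟨hq, hp⟩
  exact hpq ⟨by simp [← hp], by simp [← hq]⟩

lemma len_swap_mul_of_lt {A B : Fin n} (hAB : (A : ℕ) + 1 = B) {σ : Perm (Fin n)}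
    (h : σ⁻¹ A < σ⁻¹ B) : len (swap A B * σ) = len σ + 1 := by
  rw [len_eq_card_invSet, invSet_swap_mul hAB h, card_insert_of_notMem, len_eq_card_invSet]
  simpa using fun _ => (Fin.lt_def.2 (by omega : (A : ℕ) < B)).le

lemma len_swap_mul_lt_iff {A B : Fin n} (hAB : (A : ℕ) + 1 = B) (σ : Perm (Fin n)) :
    len (swap A B * σ) < len σ ↔ σ⁻¹ B < σ⁻¹ A := by
  have hne : σ⁻¹ A ≠ σ⁻¹ B := σ⁻¹.injective.ne (Fin.ne_of_val_ne (by omega))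
  rcases hne.lt_or_gt with h | h
  · exact iff_of_false (by rw [len_swap_mul_of_lt hAB h]; omega) h.not_gt
  · have h' : (swap A B * σ)⁻¹ A < (swap A B * σ)⁻¹ B := by simpa [mul_inv_rev] using h
    have := len_swap_mul_of_lt hAB h'
    rw [← mul_assoc, swap_mul_self, one_mul] at this
    exact iff_of_true (by omega) h

lemma leftCov_iff {σ τ : Perm (Fin n)} :
    leftCov σ τ ↔ ∃ A B : Fin n, (A : ℕ) + 1 = B ∧ σ⁻¹ A < σ⁻¹ B ∧ τ = swap A B * σ := by
  constructor
  · rintro ⟨i, hi, rfl, hlen⟩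
    refine ⟨⟨i, by omega⟩, ⟨i + 1, hi⟩, rfl, ?_, rfl⟩
    have hne : σ⁻¹ ⟨i, by omega⟩ ≠ σ⁻¹ ⟨i + 1, hi⟩ := σ⁻¹.injective.ne (by simp)
    exact hne.lt_of_le (not_lt.1 fun h => ((len_swap_mul_lt_iff rfl σ).2 h).not_gt hlen)
  · rintro ⟨⟨a, ha⟩, ⟨b, hb⟩, hab, hlt, rfl⟩
    obtain rfl : a + 1 = b := hab
    exact ⟨a, hb, rfl, by rw [len_swap_mul_of_lt rfl hlt]; omega⟩

lemma invSet_subset_of_leftWeakLe {σ τ : Perm (Fin n)} (h : leftWeakLe σ τ) :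
    invSet σ ⊆ invSet τ := by
  induction h with
  | refl => rfl
  | tail _ hcov ih =>
    obtain ⟨A, B, hAB, hlt, rfl⟩ := leftCov_iff.1 hcov
    rw [invSet_swap_mul hAB hlt]
    exact ih.trans (subset_insert _ _)

lemma exists_leftDescent_of_ssubset {σ τ : Perm (Fin n)} (h : invSet σ ⊂ invSet τ) :
    ∃ A B : Fin n, (A : ℕ) + 1 = B ∧ τ⁻¹ B < τ⁻¹ A ∧ (τ⁻¹ B, τ⁻¹ A) ∉ invSet σ := by
  obtain ⟨⟨p, q⟩, hτ, hσ⟩ := exists_of_ssubset h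
  rw [mem_invSet] at hτ hσ
  have hσpq : σ p < σ q := (σ.injective.ne hτ.1.ne).lt_of_le (not_lt.1 fun h' => hσ ⟨hτ.1, h'⟩)
  -- `σ τ⁻¹` maps `τ q < τ p` to `σ q > σ p`, so it has a descent between them
  obtain ⟨A, B, hAB, -, -, hBA⟩ :=
    Fin.exists_adjacent_lt (σ * τ⁻¹) hτ.2.le (by simpa using hσpq)
  simp only [Perm.mul_apply] at hBA
  have hAB' : A < B := Fin.lt_def.2 (by omega)
  refine ⟨A, B, hAB, (τ⁻¹.injective.ne hAB'.ne').lt_of_le (not_lt.1 fun hlt => ?_),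
    fun hmem => (mem_invSet.1 hmem).2.not_gt hBA⟩
  have := (mem_invSet.1 (h.subset (mem_invSet (x := (τ⁻¹ A, τ⁻¹ B)).2 ⟨hlt, hBA⟩))).2
  exact this.not_gt (by simpa using hAB')

lemma leftWeakLe_of_invSet_subset {σ τ : Perm (Fin n)} (h : invSet σ ⊆ invSet τ) :
    leftWeakLe σ τ := by
  obtain heq | hss := h.eq_or_ssubset
  · rw [eq_of_invSet_eq heq]
    exact .refl
  obtain ⟨A, B, hAB, hlt, hnot⟩ := exists_leftDescent_of_ssubset hss
  have hlt' : (swap A B * τ)⁻¹ A < (swap A B * τ)⁻¹ B := by simpa [mul_inv_rev] using hlt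
  have hτ : swap A B * (swap A B * τ) = τ := by rw [← mul_assoc, swap_mul_self, one_mul]
  have hinv : invSet τ = insert (τ⁻¹ B, τ⁻¹ A) (invSet (swap A B * τ)) := by
    convert invSet_swap_mul hAB hlt' using 3 <;> simp [hτ, mul_inv_rev]
  have hsub : invSet σ ⊆ invSet (swap A B * τ) := fun x hx =>
    (mem_insert.1 (hinv ▸ h hx)).resolve_left (ne_of_mem_of_not_mem hx hnot)
  have : len (swap A B * τ) < len τ := (len_swap_mul_lt_iff hAB τ).2 hlt
  exact (leftWeakLe_of_invSet_subset hsub).tail (leftCov_iff.2 ⟨A, B, hAB, hlt', hτ.symm⟩)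
termination_by len τ

lemma leftWeakLe_iff_invSet_subset {σ τ : Perm (Fin n)} :
    leftWeakLe σ τ ↔ invSet σ ⊆ invSet τ :=
  ⟨invSet_subset_of_leftWeakLe, leftWeakLe_of_invSet_subset⟩

/-- The index of the block containing `v` when `ℕ` is cut just before each element of `F`. -/
def blockIdx (F : Finset ℕ) (v : ℕ) : ℕ := #(F.filter fun k => k < v + 1)

lemma blockIdx_mono (F : Finset ℕ) : Monotone (blockIdx F) := fun v w h =>
  card_le_card (monotone_filter_right F fun k hk => by omega)

lemma blockIdx_lt_blockIdx_iff {F : Finset ℕ} {v w : ℕ} (h : v ≤ w) :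
    blockIdx F v < blockIdx F w ↔ ∃ k ∈ F, v < k ∧ k ≤ w := by
  have hsub : F.filter (· < v + 1) ⊆ F.filter (· < w + 1) :=
    monotone_filter_right F fun k hk => by omega
  rw [blockIdx, blockIdx]
  constructor
  · intro hlt
    obtain ⟨k, hk, hk'⟩ := (ssubset_iff_of_subset hsub).1
      (hsub.ssubset_of_ne fun heq => by rw [heq] at hlt; exact lt_irrefl _ hlt)
    simp only [mem_filter, not_and, not_lt] at hk hk'
    exact ⟨k, hk.1, by have := hk' hk.1; omega, by omega⟩
  · rintro ⟨k, hk, hvk, hkw⟩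
    refine card_lt_card ((ssubset_iff_of_subset hsub).2 ⟨k, ?_, ?_⟩) <;>
      simp only [mem_filter, hk, true_and] <;> omega

lemma blockIdx_succ_le (F : Finset ℕ) (v : ℕ) : blockIdx F (v + 1) ≤ blockIdx F v + 1 := by
  refine (card_le_card fun k hk => ?_).trans (card_insert_le (v + 1) _)
  simp only [mem_filter, mem_insert] at hk ⊢
  exact ((Nat.lt_succ_iff_lt_or_eq.1 hk.2).imp_left (⟨hk.1, ·⟩)).symm

lemma exists_blockIdx_eq {F : Finset ℕ} {m : ℕ} (N : ℕ) (h0 : blockIdx F 0 ≤ m)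
    (hN : m ≤ blockIdx F N) : ∃ v ≤ N, blockIdx F v = m := by
  induction N with
  | zero => exact ⟨0, le_rfl, le_antisymm h0 hN⟩
  | succ N ih =>
    by_cases hm : m ≤ blockIdx F N
    · obtain ⟨v, hv, rfl⟩ := ih hm
      exact ⟨v, by omega, rfl⟩
    · exact ⟨N + 1, le_rfl, by have := blockIdx_succ_le F N; omega⟩

lemma exists_image_blockIdx_eq_Icc {F : Finset ℕ} (hF : ∀ k ∈ F, 0 < k ∧ k < n) :
    ∃ l, (univ : Finset (Fin n)).image (fun v : Fin n => 1 + blockIdx F v) = Icc 1 l := by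
  rcases Nat.eq_zero_or_pos n with rfl | hn
  · exact ⟨0, by simp⟩
  refine ⟨1 + #F, ?_⟩
  have h0 : blockIdx F 0 = 0 := by
    simp only [blockIdx, card_eq_zero, filter_eq_empty_iff]
    intro k hk; have := hF k hk; omega
  have hN : blockIdx F (n - 1) = #F := by
    rw [blockIdx, filter_true_of_mem]
    intro k hk; have := hF k hk; omega
  ext m
  simp only [mem_image, mem_univ, true_and, mem_Icc]
  constructor
  · rintro ⟨v, rfl⟩
    exact ⟨by omega, by have := card_filter_le F (· < (v : ℕ) + 1); simp only [blockIdx]; omega⟩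
  · rintro ⟨hm1, hm2⟩
    obtain ⟨v, hv, hvm⟩ := exists_blockIdx_eq (F := F) (m := m - 1) (n - 1) (by omega) (by omega)
    exact ⟨⟨v, by omega⟩, by simp only [hvm]; omega⟩

def rowIdx (n : ℕ) (S : Finset ℕ) (p : ℕ) : ℕ := blockIdx (Icc 1 (n - 1) \ S) p

noncomputable def colIdx (ρ : Perm (Fin n)) (v : ℕ) : ℕ := blockIdx (DesL ρ) v

/-- `box S ρ p = (i, j)` records that the value `ρ p` lies in `R_j ∩ C_i`. -/
noncomputable def box (S : Finset ℕ) (ρ : Perm (Fin n)) (p : Fin n) : ℕ × ℕ :=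
  (1 + colIdx ρ (ρ p), 1 + rowIdx n S p)

lemma rowIdx_mono (n : ℕ) (S : Finset ℕ) : Monotone (rowIdx n S) := blockIdx_mono _

lemma colIdx_mono (ρ : Perm (Fin n)) : Monotone (colIdx ρ) := blockIdx_mono _

lemma Dalg_eq_image_box (S : Finset ℕ) (ρ : Perm (Fin n)) :
    Dalg S ρ = univ.image (box S ρ) := rfl

lemma rowIdx_eq_rowIdx_iff (S : Finset ℕ) {p q : ℕ} (hpq : p ≤ q) (hq : q < n) :
    rowIdx n S p = rowIdx n S q ↔ ∀ k, p < k → k ≤ q → k ∈ S := by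
  rw [rowIdx, rowIdx, ← (blockIdx_mono _ hpq).not_lt_iff_eq, blockIdx_lt_blockIdx_iff hpq]
  simp only [mem_sdiff, mem_Icc, not_exists, not_and]
  exact ⟨fun h k hpk hkq => by_contra fun hkS => h k ⟨⟨by omega, by omega⟩, hkS⟩ hpk hkq,
    fun h k hk hpk hkq => hk.2 (h k hpk hkq)⟩

lemma mem_cfilter {α : Type*} {p : α → Prop} {s : Finset α} {x : α} :
    x ∈ cfilter p s ↔ x ∈ s ∧ p x :=
  @mem_filter α p (fun _ => Classical.propDecidable _) s x

lemma mem_DesL_of_inv_lt {ρ : Perm (Fin n)} {A B : Fin n} (hAB : (A : ℕ) + 1 = B)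
    (h : ρ⁻¹ B < ρ⁻¹ A) : (B : ℕ) ∈ DesL ρ := by
  obtain ⟨a, ha⟩ := A
  obtain ⟨b, hb⟩ := B
  obtain rfl : a + 1 = b := hAB
  exact mem_cfilter.2 ⟨mem_Ioo.2 ⟨a.succ_pos, hb⟩, ha, hb, (len_swap_mul_lt_iff rfl ρ).2 h⟩

lemma pos_lt_of_mem_DesL {ρ : Perm (Fin n)} {k : ℕ} (hk : k ∈ DesL ρ) : 0 < k ∧ k < n :=
  mem_Ioo.1 (mem_cfilter.1 hk).1

lemma colIdx_lt_colIdx_of_inv_lt (ρ : Perm (Fin n)) {v w : Fin n} (hvw : v < w)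
    (h : ρ⁻¹ w < ρ⁻¹ v) : colIdx ρ v < colIdx ρ w := by
  obtain ⟨A, B, hAB, hvA, hBw, hBA⟩ := Fin.exists_adjacent_lt (⇑ρ⁻¹) hvw.le h
  exact (blockIdx_lt_blockIdx_iff (Fin.le_def.1 hvw.le)).2
    ⟨B, mem_DesL_of_inv_lt hAB hBA, by rw [Fin.le_def] at hvA; omega, hBw⟩

lemma inv_lt_inv_of_colIdx_eq (ρ : Perm (Fin n)) {v w : Fin n} (hvw : v < w)
    (h : colIdx ρ v = colIdx ρ w) : ρ⁻¹ v < ρ⁻¹ w :=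
  (ρ⁻¹.injective.ne hvw.ne).lt_of_le
    (not_lt.1 fun hlt => (colIdx_lt_colIdx_of_inv_lt ρ hvw hlt).ne h)

lemma rowIdx_apply_of_mem_closure {S : Finset ℕ} {σ : Perm (Fin n)}
    (hσ : σ ∈ Subgroup.closure (genSet n S)) (p : Fin n) :
    rowIdx n S (σ p) = rowIdx n S p := by
  induction hσ using Subgroup.closure_induction generalizing p with
  | mem g hg =>
    obtain ⟨i, hiS, hi, rfl⟩ := hg
    have hrow : rowIdx n S (i - 1) = rowIdx n S i :=
      (rowIdx_eq_rowIdx_iff S (i.sub_le 1) hi).2 fun k hk hki => by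
        obtain rfl : k = i := by omega
        exact hiS
    rw [swap_apply_def]
    split_ifs with h1 h2
    · simp [h1, hrow]
    · simp [h2, hrow]
    · rfl
  | one => rfl
  | mul x y _ _ hx hy => rw [Perm.mul_apply, hx, hy]
  | inv x _ hx => simpa using (hx (x⁻¹ p)).symm

lemma rowIdx_eq_of_mem_invSet {S : Finset ℕ} {σ : Perm (Fin n)}
    (hσ : σ ∈ Subgroup.closure (genSet n S)) {p q : Fin n} (h : (p, q) ∈ invSet σ) :
    rowIdx n S p = rowIdx n S q := by
  rw [mem_invSet] at h
  have hpq : rowIdx n S p ≤ rowIdx n S q := blockIdx_mono _ (Fin.le_def.1 h.1.le)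
  have hqp : rowIdx n S (σ q) ≤ rowIdx n S (σ p) := blockIdx_mono _ (Fin.le_def.1 h.2.le)
  rw [rowIdx_apply_of_mem_closure hσ, rowIdx_apply_of_mem_closure hσ] at hqp
  omega

lemma _root_.IsLongest.mem_invSet_iff {S : Finset ℕ} {w0 : Perm (Fin n)}
    (hw0 : IsLongest (genSet n S) w0) {p q : Fin n} :
    (p, q) ∈ invSet w0 ↔ p < q ∧ rowIdx n S p = rowIdx n S q := by
  refine ⟨fun h => ⟨(mem_invSet.1 h).1, rowIdx_eq_of_mem_invSet hw0.1 h⟩, fun ⟨hpq, hrow⟩ => ?_⟩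
  by_contra hnot
  have hasc : toDual (w0 q) < toDual (w0 p) :=
    (w0.injective.ne hpq.ne).lt_of_le (not_lt.1 fun h => hnot (mem_invSet.2 ⟨hpq, h⟩))
  -- an ascent of `w0` inside the row block of `p` and `q` would let `w0` grow inside the group
  obtain ⟨A, B, hAB, hpA, hBq, hBA⟩ := Fin.exists_adjacent_lt (toDual ∘ w0) hpq.le hasc
  have hBS : (B : ℕ) ∈ S :=
    (rowIdx_eq_rowIdx_iff S (Fin.le_def.1 hpq.le) q.2).1 hrow B
      (by rw [Fin.le_def] at hpA; omega) hBq
  have hgen : swap A B ∈ Subgroup.closure (genSet n S) :=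
    Subgroup.subset_closure ⟨B, hBS, B.2, by congr 1; ext; simp; omega⟩
  have hlen : len (w0 * swap A B) = len w0 + 1 := by
    rw [← len_inv, mul_inv_rev, swap_inv, len_swap_mul_of_lt hAB (by simpa using hBA), len_inv]
  have := hw0.2 _ (mul_mem hw0.1 hgen)
  omega

lemma _root_.IsLongest.inv_eq {S : Finset ℕ} {w0 : Perm (Fin n)}
    (hw0 : IsLongest (genSet n S) w0) : w0⁻¹ = w0 := by
  refine eq_of_invSet_eq (eq_of_subset_of_card_le (fun ⟨p, q⟩ h => ?_) ?_)
  · exact hw0.mem_invSet_iff.2 ⟨(mem_invSet.1 h).1, rowIdx_eq_of_mem_invSet (inv_mem hw0.1) h⟩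
  · rw [← len_eq_card_invSet, ← len_eq_card_invSet, len_inv]

def readKey (x : ℕ × ℕ) : ℕ ×ₗ ℕᵒᵈ := toLex (x.2, toDual x.1)

def srcKey (x : ℕ × ℕ) : ℕ ×ₗ ℕ := toLex (x.2, x.1)

lemma readKey_injective : Function.Injective readKey := fun x y h => by
  simpa [readKey, Prod.ext_iff, and_comm] using h

lemma srcKey_injective : Function.Injective srcKey := fun x y h => by
  simpa [srcKey, Prod.ext_iff, and_comm] using h

lemma readKey_lt_readKey {x y : ℕ × ℕ} :
    readKey x < readKey y ↔ x.2 < y.2 ∨ x.2 = y.2 ∧ y.1 < x.1 := by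
  simp [readKey, Prod.Lex.toLex_lt_toLex]

lemma srcKey_lt_srcKey {x y : ℕ × ℕ} :
    srcKey x < srcKey y ↔ x.2 < y.2 ∨ x.2 = y.2 ∧ x.1 < y.1 := by
  simp [srcKey, Prod.Lex.toLex_lt_toLex]

lemma _root_.ReadEnum.strictMono {r : Fin n → ℕ × ℕ} (h : ReadEnum r) :
    StrictMono (readKey ∘ r) := fun i j hij => readKey_lt_readKey.2 ((h i j).1 hij)

lemma _root_.RowEnum.strictMono_comp_rev {e : Fin n → ℕ × ℕ} (h : RowEnum e) :
    StrictMono (readKey ∘ e ∘ Fin.rev) := fun _ _ hij =>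
  readKey_lt_readKey.2 (((h _ _).1 (Fin.rev_lt_rev.2 hij)).imp_right (And.imp_left Eq.symm))

lemma _root_.SrcEnum.strictMono {u : Fin n → ℕ × ℕ} (h : SrcEnum u) :
    StrictMono (srcKey ∘ u) := fun i j hij => srcKey_lt_srcKey.2 ((h i j).1 hij)

lemma _root_.ColEnum.strictMono {t : Fin n → ℕ × ℕ} (h : ColEnum t) :
    StrictMono (toLex ∘ t) := fun i j hij => Prod.Lex.toLex_lt_toLex.2 ((h i j).1 hij)

lemma eq_of_strictMono_comp {γ β : Type*} [PartialOrder β] {κ : γ → β}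
    (hκ : Function.Injective κ) {f g : Fin n → γ} (hf : StrictMono (κ ∘ f))
    (hg : StrictMono (κ ∘ g)) (h : Set.range f = Set.range g) : f = g :=
  hκ.comp_left ((hf.range_inj hg).1 (by rw [Set.range_comp, Set.range_comp, h]))

section Box

variable {S : Finset ℕ} {ρ w0 : Perm (Fin n)}

lemma colIdx_lt_of_rowIdx_eq (hw0 : IsLongest (genSet n S) w0) (hle : leftWeakLe w0 ρ)
    {p q : Fin n} (hpq : p < q) (hrow : rowIdx n S p = rowIdx n S q) :
    colIdx ρ (ρ q) < colIdx ρ (ρ p) := by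
  have hinv := invSet_subset_of_leftWeakLe hle (hw0.mem_invSet_iff.2 ⟨hpq, hrow⟩)
  exact colIdx_lt_colIdx_of_inv_lt ρ (mem_invSet.1 hinv).2 (by simpa using hpq)

lemma strictMono_readKey_box (hw0 : IsLongest (genSet n S) w0) (hle : leftWeakLe w0 ρ) :
    StrictMono (readKey ∘ box S ρ) := by
  intro p q hpq
  simp only [Function.comp, readKey_lt_readKey, box]
  rcases (rowIdx_mono n S (Fin.le_def.1 hpq.le)).lt_or_eq with hrow | hrow
  · exact .inl (by omega)
  · exact .inr ⟨by omega, by have := colIdx_lt_of_rowIdx_eq hw0 hle hpq hrow; omega⟩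

lemma strictMono_toLex_box_inv (hw0 : IsLongest (genSet n S) w0) (hle : leftWeakLe w0 ρ) :
    StrictMono (toLex ∘ box S ρ ∘ ⇑ρ⁻¹) := by
  intro v w hvw
  have hρ (x : Fin n) : ρ (ρ⁻¹ x) = x := ρ.apply_symm_apply x
  simp only [Function.comp, Prod.Lex.toLex_lt_toLex, box, hρ]
  rcases (colIdx_mono ρ (Fin.le_def.1 hvw.le)).lt_or_eq with hcol | hcol
  · exact .inl (by omega)
  refine .inr ⟨by omega, ?_⟩
  have hinv := inv_lt_inv_of_colIdx_eq ρ hvw hcol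
  rcases (rowIdx_mono n S (Fin.le_def.1 hinv.le)).lt_or_eq with hrow | hrow
  · omega
  · have := colIdx_lt_of_rowIdx_eq hw0 hle hinv hrow
    rw [hρ, hρ] at this
    omega

lemma strictMono_srcKey_box_w0 (hw0 : IsLongest (genSet n S) w0) (hle : leftWeakLe w0 ρ) :
    StrictMono (srcKey ∘ box S ρ ∘ w0) := by
  intro p q hpq
  simp only [Function.comp, srcKey_lt_srcKey, box, rowIdx_apply_of_mem_closure hw0.1]
  rcases (rowIdx_mono n S (Fin.le_def.1 hpq.le)).lt_or_eq with hrow | hrow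
  · exact .inl (by omega)
  have hdesc : w0 q < w0 p := (mem_invSet.1 (hw0.mem_invSet_iff.2 ⟨hpq, hrow⟩)).2
  have := colIdx_lt_of_rowIdx_eq hw0 hle hdesc
    (by rw [rowIdx_apply_of_mem_closure hw0.1, rowIdx_apply_of_mem_closure hw0.1, hrow])
  exact .inr ⟨by omega, by omega⟩

lemma box_le_box_iff_of_lt {p q : Fin n} (hpq : p < q) : box S ρ p ≤ box S ρ q ↔ ρ p < ρ q := by
  have hrow := rowIdx_mono n S (Fin.le_def.1 hpq.le)
  simp only [Prod.le_def, box]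
  constructor
  · refine fun h => (ρ.injective.ne hpq.ne).lt_of_le (not_lt.1 fun hlt => ?_)
    have := colIdx_lt_colIdx_of_inv_lt ρ hlt (by simpa using hpq)
    omega
  · exact fun h => ⟨by have := colIdx_mono ρ (Fin.le_def.1 h.le); omega, by omega⟩

lemma box_le_box_iff_mem_invSet (hw0 : IsLongest (genSet n S) w0) (hle : leftWeakLe w0 ρ)
    {p q : Fin n} (hpq : p < q) : box S ρ q ≤ box S ρ p ↔ (p, q) ∈ invSet w0 := by
  have hrow := rowIdx_mono n S (Fin.le_def.1 hpq.le)
  rw [hw0.mem_invSet_iff]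
  simp only [Prod.le_def, box]
  constructor
  · exact fun h => ⟨hpq, by omega⟩
  · rintro ⟨-, h⟩
    have := colIdx_lt_of_rowIdx_eq hw0 hle hpq h
    omega

lemma forall_box_le_imp_iff (hw0 : IsLongest (genSet n S) w0) (hle : leftWeakLe w0 ρ)
    (δ : Perm (Fin n)) :
    (∀ p q, box S ρ p ≤ box S ρ q → p ≠ q → δ p < δ q) ↔
      invSet w0 ⊆ invSet δ ∧ invSet δ ⊆ invSet ρ := by
  constructor
  · intro h
    refine ⟨fun ⟨p, q⟩ hw => ?_, fun ⟨p, q⟩ hδ => ?_⟩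
    · have hpq := (mem_invSet.1 hw).1
      exact mem_invSet.2 ⟨hpq, h q p ((box_le_box_iff_mem_invSet hw0 hle hpq).2 hw) hpq.ne'⟩
    · obtain ⟨hpq, hδ⟩ := mem_invSet.1 hδ
      refine mem_invSet.2 ⟨hpq, (ρ.injective.ne hpq.ne').lt_of_le (not_lt.1 fun hlt => ?_)⟩
      exact (h p q ((box_le_box_iff_of_lt hpq).2 hlt) hpq.ne).not_gt hδ
  · rintro ⟨hwδ, hδρ⟩ p q hbox hne
    rcases hne.lt_or_gt with hpq | hqp
    · refine (δ.injective.ne hne).lt_of_le (not_lt.1 fun hlt => ?_)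
      have := (mem_invSet.1 (hδρ (mem_invSet (x := (p, q)).2 ⟨hpq, hlt⟩))).2
      exact ((box_le_box_iff_of_lt hpq).1 hbox).not_gt this
    · exact (mem_invSet.1 (hwδ ((box_le_box_iff_mem_invSet hw0 hle hqp).1 hbox))).2

lemma SigmaRD_eq_image_leftInterval (hw0 : IsLongest (genSet n S) w0)
    (hle : leftWeakLe w0 ρ) {e : Fin n → ℕ × ℕ} (he : e ∘ Fin.rev = box S ρ) :
    SigmaRD e = (fun γ => Fin.revPerm * γ⁻¹) '' leftInterval w0 ρ := by
  rw [Set.image_eq_preimage_of_inverse (g := fun δ => δ⁻¹ * Fin.revPerm)]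
  · ext γ
    simp only [SigmaRD, leftInterval, Set.mem_ofPred_eq, Set.mem_preimage,
      leftWeakLe_iff_invSet_subset]
    rw [← forall_box_le_imp_iff hw0 hle, Fin.rev_surjective.forall₂, ← he]
    simp only [Function.comp, Prod.le_def, Perm.mul_apply, Fin.revPerm_apply, ne_eq, Fin.rev_inj,
      and_imp]
  all_goals intro γ; simp [mul_inv_rev]

end Box

lemma diagOK_image_box (S : Finset ℕ) (ρ : Perm (Fin n)) : DiagOK (univ.image (box S ρ)) := by
  obtain ⟨k, hk⟩ := exists_image_blockIdx_eq_Icc fun _ => pos_lt_of_mem_DesL (ρ := ρ)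
  obtain ⟨l, hl⟩ := exists_image_blockIdx_eq_Icc (n := n) (F := Icc 1 (n - 1) \ S) fun m hm => by
    simp only [mem_sdiff, mem_Icc] at hm; omega
  refine ⟨⟨k, ?_⟩, ⟨l, ?_⟩⟩ <;> rw [image_image]
  · rw [← hk]
    conv_rhs => rw [← image_univ_equiv ρ, image_image]
    rfl
  · exact hl

lemma eq_inv_of_apply_apply {α β : Type*} {f : α → β} (hf : Function.Injective f)
    {π w : Perm α} (h : ∀ p, f (π (w p)) = f p) : w = π⁻¹ := by
  ext p
  exact Perm.eq_inv_iff_eq.2 (hf (h p))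

end AlgorithmDiagram

open AlgorithmDiagram

theorem algorithm_diagram_spec_general {n : ℕ} (α : List ℕ)
    (ρ w0α : Perm (Fin n))
    (hw0α : IsLongest (genSet n (psums α)) w0α)
    (hle : leftWeakLe w0α ρ)
    (e u t r : Fin n → ℕ × ℕ)
    (he : RowEnum e) (hre : Set.range e = ↑(Dalg (psums α) ρ))
    (hu : SrcEnum u) (hru : Set.range u = ↑(Dalg (psums α) ρ))
    (ht : ColEnum t) (hrt : Set.range t = ↑(Dalg (psums α) ρ))
    (hr : ReadEnum r) (hrr : Set.range r = ↑(Dalg (psums α) ρ))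
    (wsrc : Perm (Fin n)) (hwsrc : ∀ p : Fin n, u (wsrc p) = r p)
    (wsink : Perm (Fin n)) (hwsink : ∀ p : Fin n, t (wsink p) = r p) :
    (Dalg (psums α) ρ).card = n ∧ DiagOK (Dalg (psums α) ρ) ∧
    wsrc = w0α ∧ wsink = ρ ∧
    SigmaRD e = (fun γ => Fin.revPerm * γ⁻¹) '' leftInterval w0α ρ := by
  set S := psums α
  have hread := strictMono_readKey_box hw0α hle
  have hinj : Function.Injective (box S ρ) := hread.injective.of_comp
  have hD : ↑(Dalg S ρ) = Set.range (box S ρ) := by simp [Dalg_eq_image_box]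
  have hr' : r = box S ρ :=
    eq_of_strictMono_comp readKey_injective hr.strictMono hread (hrr.trans hD)
  have he' : e ∘ Fin.rev = box S ρ :=
    eq_of_strictMono_comp readKey_injective he.strictMono_comp_rev hread
      ((Fin.rev_surjective.range_comp e).trans (hre.trans hD))
  have ht' : t = box S ρ ∘ ⇑ρ⁻¹ :=
    eq_of_strictMono_comp (toLex (α := ℕ × ℕ)).injective ht.strictMono
      (strictMono_toLex_box_inv hw0α hle) (by rw [hrt, hD, ρ⁻¹.surjective.range_comp])
  have hu' : u = box S ρ ∘ w0α :=
    eq_of_strictMono_comp srcKey_injective hu.strictMono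
      (strictMono_srcKey_box_w0 hw0α hle) (by rw [hru, hD, w0α.surjective.range_comp])
  refine ⟨?_, diagOK_image_box S ρ, ?_, ?_, SigmaRD_eq_image_leftInterval hw0α hle he'⟩
  · rw [Dalg_eq_image_box, Finset.card_image_of_injective _ hinj, Finset.card_univ,
      Fintype.card_fin]
  · rw [eq_inv_of_apply_apply hinj (π := w0α) (w := wsrc) (by simpa [hu', hr'] using hwsrc),
      hw0α.inv_eq]
  · rw [eq_inv_of_apply_apply hinj (π := ρ⁻¹) (w := wsink) (by simpa [ht', hr'] using hwsink),
      inv_inv]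

/-- Let `α ⊨ n` and `ρ ∈ S_n` with `w₀(α) ≤_L ρ`.  Then the diagram
`D = D_{α;ρ}` produced by the algorithm has `n` boxes and lies in `𝔇_n`, the
reading word of its source tableau is `w₀(α)`, the reading word of its sink
tableau is `ρ`, and consequently
`Σ_R(P_D) = { w₀ γ⁻¹ : γ ∈ [w₀(α), ρ]_L }`. -/
theorem algorithm_diagram_spec {n : ℕ} (α : List ℕ)
    (hα : ∀ x ∈ α, 0 < x) (hsum : α.sum = n)
    (ρ w0α : Perm (Fin n))
    (hw0α : IsLongest (genSet n (psums α)) w0α)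
    (hle : leftWeakLe w0α ρ)
    (e u t r : Fin n → ℕ × ℕ)
    (he : RowEnum e) (hre : Set.range e = ↑(Dalg (psums α) ρ))
    (hu : SrcEnum u) (hru : Set.range u = ↑(Dalg (psums α) ρ))
    (ht : ColEnum t) (hrt : Set.range t = ↑(Dalg (psums α) ρ))
    (hr : ReadEnum r) (hrr : Set.range r = ↑(Dalg (psums α) ρ))
    (wsrc : Perm (Fin n)) (hwsrc : ∀ p : Fin n, u (wsrc p) = r p)
    (wsink : Perm (Fin n)) (hwsink : ∀ p : Fin n, t (wsink p) = r p) :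
    (Dalg (psums α) ρ).card = n ∧ DiagOK (Dalg (psums α) ρ) ∧
    wsrc = w0α ∧ wsink = ρ ∧
    SigmaRD e = (fun γ => Fin.revPerm * γ⁻¹) '' leftInterval w0α ρ :=
  algorithm_diagram_spec_general α ρ w0α hw0α hle e u t r he hre hu hru ht hrt hr hrr wsrc hwsrc
    wsink hwsink
end

section
/- Let α be a composition of n and define T'_α to be the standard extended tableau of shape α filling the composition diagram cd(α) with 1,...,n from top to bottom along columns, left to right. Then D_{α^c; read(T'_α)} = {(i,j) : (j,i) ∈ cd(α)}, the transpose of the composition diagram of α. -/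
/-! In `T'_α` the entry `m + 1` either lies below `m` in the same column, and is then
read after it, or starts the next column; as the rows are left-justified it then lies weakly
above `m` and is read before it. So the left descents of `ρ = read(T'_α)` are exactly the first
entries of the columns, and the `Des_L(ρ)`-block of the value `ρ(r)` is the column of the box
read at position `r`. Since rows are read one after another, the `set(α)`-block of the position
`r` is the row of that box. Hence position `r` contributes the transpose of that box. -/

open Equiv

/-- The composition diagram `cd(α)`: boxes `(i,j)` (row `i` from the top, column
`j` from the left) with `1 ≤ i ≤ ℓ(α)` and `1 ≤ j ≤ αᵢ`. -/
def cdFinset (α : List ℕ) : Finset (ℕ × ℕ) :=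
  (Finset.range α.length).biUnion fun i =>
    (Finset.Icc 1 (α.getD i 0)).image fun j => (i + 1, j)

/-- Filling order of `T'_α`: along columns top to bottom, columns left to right. -/
def ColTopEnum {n : ℕ} (v : Fin n → ℕ × ℕ) : Prop :=
  ∀ i j : Fin n, i < j ↔ ((v i).2 < (v j).2 ∨ ((v i).2 = (v j).2 ∧ (v i).1 < (v j).1))

/-- Reading order for composition diagrams: rows right to left, starting with the
top row. -/
def ReadTopEnum {n : ℕ} (q : Fin n → ℕ × ℕ) : Prop :=
  ∀ i j : Fin n, i < j ↔ ((q i).1 < (q j).1 ∨ ((q i).1 = (q j).1 ∧ (q j).2 < (q i).2))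

open Finset

lemma swap_lt_swap_iff_of_adjacent {n : ℕ} {a b x y : Fin n} (hab : (a : ℕ) + 1 = b)
    (hxy : ¬(x = a ∧ y = b)) (hyx : ¬(x = b ∧ y = a)) :
    swap a b x < swap a b y ↔ x < y := by
  simp only [Fin.ext_iff, not_and] at hxy hyx
  simp only [swap_apply_def, Fin.lt_def]
  split_ifs <;> simp only [Fin.ext_iff] at * <;> omega

lemma len_swap_mul_lt_iff {n : ℕ} (σ : Perm (Fin n)) {a b : Fin n} (hab : (a : ℕ) + 1 = b) :
    len (swap a b * σ) < len σ ↔ σ⁻¹ b < σ⁻¹ a := by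
  set u := σ⁻¹ a
  set w := σ⁻¹ b
  have hu : σ u = a := σ.apply_symm_apply a
  have hw : σ w = b := σ.apply_symm_apply b
  have hab' : a < b := Fin.lt_def.2 (by omega)
  have huw : u ≠ w := fun h => hab'.ne (by rw [← hu, ← hw, h])
  -- Only the pair of positions of the values `a` and `b` changes its inversion status.
  have hrest : ∀ p ∉ ({(u, w), (w, u)} : Finset (Fin n × Fin n)),
      (p.1 < p.2 ∧ (swap a b * σ) p.2 < (swap a b * σ) p.1) ↔
        (p.1 < p.2 ∧ σ p.2 < σ p.1) := by
    rintro ⟨x, y⟩ hp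
    simp only [mem_insert, mem_singleton, Prod.mk.injEq, not_or] at hp
    rw [Perm.mul_apply, Perm.mul_apply, swap_lt_swap_iff_of_adjacent hab]
    · rintro ⟨h1, h2⟩
      exact hp.2 ⟨σ.injective (h2.trans hw.symm), σ.injective (h1.trans hu.symm)⟩
    · rintro ⟨h1, h2⟩
      exact hp.1 ⟨σ.injective (h2.trans hu.symm), σ.injective (h1.trans hw.symm)⟩
  have hpair : (u, w) ≠ (w, u) := fun h => huw (Prod.ext_iff.1 h).1
  simp only [len, card_filter]
  rw [← sum_add_sum_compl {(u, w), (w, u)}, ← sum_add_sum_compl {(u, w), (w, u)},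
    sum_congr rfl fun p hp => if_congr (hrest p (mem_compl.1 hp)) rfl rfl,
    sum_pair hpair, sum_pair hpair]
  simp only [Perm.mul_apply, hu, hw, swap_apply_left, swap_apply_right]
  rcases lt_or_gt_of_ne huw with h | h <;> simp [h, h.not_gt, hab', hab'.not_gt]

lemma mem_cfilter {β : Type*} {P : β → Prop} {s : Finset β} {x : β} :
    x ∈ cfilter P s ↔ x ∈ s ∧ P x :=
  @Finset.mem_filter _ _ (fun _ => Classical.propDecidable _) _ _

lemma mem_Ioo_of_mem_DesL {n : ℕ} {ρ : Perm (Fin n)} {k : ℕ} (hk : k ∈ DesL ρ) :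
    k ∈ Ioo 0 n :=
  (mem_cfilter.1 hk).1

lemma mem_DesL_iff {n : ℕ} (ρ : Perm (Fin n)) {i j : Fin n} (hij : (i : ℕ) + 1 = j) :
    (j : ℕ) ∈ DesL ρ ↔ ρ⁻¹ j < ρ⁻¹ i := by
  have hi : (⟨j - 1, by omega⟩ : Fin n) = i := Fin.ext (by simp only; omega)
  rw [DesL, mem_cfilter, mem_Ioo]
  constructor
  · rintro ⟨-, _, _, hlen⟩
    rwa [Fin.eta, len_swap_mul_lt_iff ρ (by simp only; omega), hi] at hlen
  · intro h
    refine ⟨⟨by omega, j.isLt⟩, by omega, j.isLt, ?_⟩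
    rwa [Fin.eta, len_swap_mul_lt_iff ρ (by simp only; omega), hi]

lemma card_filter_rel_apply_eq_of_lt_iff {β : Type*} {n : ℕ} {r : β → β → Prop}
    [DecidableRel r] {e : Fin n → β} {s : Finset β} (he : ∀ i j, i < j ↔ r (e i) (e j))
    (hs : Set.range e = s) (p : Fin n) : #{c ∈ s | r c (e p)} = p := by
  have hinj : Function.Injective e := fun i j hij => by
    by_contra hne
    rcases lt_or_gt_of_ne hne with h | h
    · exact lt_irrefl i ((he i i).2 (hij ▸ (he i j).1 h))
    · exact lt_irrefl j ((he j j).2 (hij ▸ (he j i).1 h))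
  have himage : {c ∈ s | r c (e p)} = (Iio p).map ⟨e, hinj⟩ := by
    ext c
    rw [mem_filter, ← mem_coe, ← hs]
    simp only [mem_map, mem_Iio, Function.Embedding.coeFn_mk, Set.mem_range]
    constructor
    · rintro ⟨⟨i, rfl⟩, h⟩
      exact ⟨i, (he i p).2 h, rfl⟩
    · rintro ⟨i, h, rfl⟩
      exact ⟨⟨i, rfl⟩, (he i p).1 h⟩
  rw [himage, card_map, Fin.card_Iio]

lemma mem_cdFinset {α : List ℕ} {c : ℕ × ℕ} :
    c ∈ cdFinset α ↔ ∃ i < α.length, c.1 = i + 1 ∧ 1 ≤ c.2 ∧ c.2 ≤ α.getD i 0 := by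
  simp only [cdFinset, mem_biUnion, mem_range, mem_image, mem_Icc]
  constructor
  · rintro ⟨i, hi, j, hj, rfl⟩
    exact ⟨i, hi, rfl, hj⟩
  · rintro ⟨i, hi, h1, hj⟩
    exact ⟨i, hi, c.2, hj, by rw [← h1]⟩

lemma mk_mem_cdFinset_of_le {α : List ℕ} {i j j' : ℕ} (h : (i, j) ∈ cdFinset α)
    (h1 : 1 ≤ j') (hj : j' ≤ j) : (i, j') ∈ cdFinset α := by
  obtain ⟨k, hk, hi, -, hj'⟩ := mem_cdFinset.1 h
  exact mem_cdFinset.2 ⟨k, hk, hi, h1, hj.trans hj'⟩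

lemma card_cdFinset (α : List ℕ) : #(cdFinset α) = α.sum := by
  rw [cdFinset, card_biUnion]
  · simp_rw [card_image_of_injective _ (Prod.mk_right_injective _), Nat.card_Icc,
      Nat.add_sub_cancel, sum_range, ← Fin.sum_univ_getElem]
    simp
  · intro i _ k _ hik
    simp only [Function.onFun, disjoint_left, mem_image]
    rintro _ ⟨_, _, rfl⟩ ⟨_, _, h⟩
    exact hik (by simpa using (Prod.ext_iff.1 h).1.symm)

lemma filter_fst_le_cdFinset (α : List ℕ) (i : ℕ) :
    {c ∈ cdFinset α | c.1 ≤ i} = cdFinset (α.take i) := by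
  ext c
  simp only [mem_filter, mem_cdFinset, List.length_take, lt_min_iff]
  constructor
  · rintro ⟨⟨k, hk, h1, h2⟩, hi⟩
    refine ⟨k, ⟨by omega, hk⟩, h1, ?_⟩
    simpa [List.getD_eq_getElem?_getD, List.getElem?_take, show k < i by omega] using h2
  · rintro ⟨k, ⟨hki, hk⟩, h1, h2⟩
    refine ⟨⟨k, hk, h1, ?_⟩, by omega⟩
    simpa [List.getD_eq_getElem?_getD, List.getElem?_take, hki] using h2

def ColLT (c d : ℕ × ℕ) : Prop := c.2 < d.2 ∨ (c.2 = d.2 ∧ c.1 < d.1)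

def ReadLT (c d : ℕ × ℕ) : Prop := c.1 < d.1 ∨ (c.1 = d.1 ∧ d.2 < c.2)

instance : DecidableRel ReadLT := fun _ _ => inferInstanceAs (Decidable (_ ∨ _))

section ColumnEnumeration

variable {n : ℕ} {α : List ℕ} {v : Fin n → ℕ × ℕ}

lemma ColTopEnum.not_between (hv : ColTopEnum v) {i j : Fin n} (hij : (i : ℕ) + 1 = j)
    (k : Fin n) : ¬(ColLT (v i) (v k) ∧ ColLT (v k) (v j)) := by
  rintro ⟨hik, hkj⟩
  have := Fin.lt_def.1 ((hv i k).2 hik)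
  have := Fin.lt_def.1 ((hv k j).2 hkj)
  omega

lemma ColTopEnum.snd_eq_one (hv : ColTopEnum v) (hrv : Set.range v = cdFinset α) {i : Fin n}
    (hi : (i : ℕ) = 0) : (v i).2 = 1 := by
  have hvi : v i ∈ cdFinset α := mem_coe.1 (hrv ▸ Set.mem_range_self i)
  obtain ⟨-, -, -, h1, -⟩ := mem_cdFinset.1 hvi
  obtain ⟨k, hk⟩ : ((v i).1, 1) ∈ Set.range v :=
    hrv ▸ mk_mem_cdFinset_of_le (Prod.mk.eta ▸ hvi) le_rfl h1
  by_contra hne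
  have := Fin.lt_def.1 ((hv k i).2 (Or.inl (by rw [hk]; omega)))
  omega

lemma ColTopEnum.snd_succ (hv : ColTopEnum v) (hrv : Set.range v = cdFinset α) {i j : Fin n}
    (hij : (i : ℕ) + 1 = j) : (v j).2 = (v i).2 + if ReadLT (v j) (v i) then 1 else 0 := by
  have hvj : v j ∈ cdFinset α := mem_coe.1 (hrv ▸ Set.mem_range_self j)
  obtain ⟨-, -, -, hi1, -⟩ := mem_cdFinset.1 (mem_coe.1 (hrv ▸ Set.mem_range_self i))
  have hrow : ∀ c, 1 ≤ c → c ≤ (v j).2 → ((v j).1, c) ∈ Set.range v := fun c h1 hc =>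
    hrv ▸ mk_mem_cdFinset_of_le (Prod.mk.eta ▸ hvj) h1 hc
  -- A box strictly between `v i` and `v j` in column order would contradict `ColTopEnum`,
  -- and left-justification of the rows provides such a box unless the claim holds.
  rcases (hv i j).1 (Fin.lt_def.2 (by omega)) with hcol | ⟨hcol, hrow_lt⟩
  · obtain ⟨k, hk⟩ := hrow ((v i).2 + 1) (by omega) hcol
    obtain ⟨k', hk'⟩ := hrow (v i).2 hi1 hcol.le
    have hstep : (v j).2 = (v i).2 + 1 := by
      by_contra hne
      refine hv.not_between hij k ⟨?_, ?_⟩ <;> rw [hk] <;> left <;> omega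
    have hread : ReadLT (v j) (v i) := by
      by_contra hr
      simp only [ReadLT, not_or, not_and, not_lt] at hr
      refine hv.not_between hij k' ⟨?_, ?_⟩ <;> rw [hk']
      · right; constructor <;> omega
      · left; omega
    rw [if_pos hread, hstep]
  · rw [if_neg (by simp only [ReadLT]; omega), hcol, add_zero]

end ColumnEnumeration

lemma readLT_iff_mem_DesL {n : ℕ} {v q : Fin n → ℕ × ℕ} (hq : ReadTopEnum q)
    {ρ : Perm (Fin n)} (hρ : ∀ p, v (ρ p) = q p) {i j : Fin n} (hij : (i : ℕ) + 1 = j) :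
    ReadLT (v j) (v i) ↔ (j : ℕ) ∈ DesL ρ := by
  have hvq : ∀ x, v x = q (ρ⁻¹ x) := fun x => by simpa using hρ (ρ⁻¹ x)
  rw [hvq, hvq, mem_DesL_iff ρ hij]
  exact (hq _ _).symm

lemma card_filter_lt_add_one (s : Finset ℕ) (m : ℕ) :
    #{k ∈ s | k < m + 1} = #{k ∈ s | k < m} + if m ∈ s then 1 else 0 := by
  have hsplit : {k ∈ s | k < m + 1} = {k ∈ s | k < m} ∪ {k ∈ s | k = m} := by
    ext k
    simp only [mem_filter, mem_union, Nat.lt_add_one_iff_lt_or_eq, and_or_left]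
  rw [hsplit, card_union_of_disjoint (disjoint_filter.2 fun _ _ h => h.ne), filter_eq']
  split_ifs <;> simp

theorem ColTopEnum.snd_eq_one_add_card_DesL {n : ℕ} {α : List ℕ} {v q : Fin n → ℕ × ℕ}
    (hv : ColTopEnum v) (hrv : Set.range v = cdFinset α) (hq : ReadTopEnum q)
    {ρ : Perm (Fin n)} (hρ : ∀ p, v (ρ p) = q p) (m : Fin n) :
    (v m).2 = 1 + #{k ∈ DesL ρ | k < (m : ℕ) + 1} := by
  obtain ⟨m, hm⟩ := m
  induction m with
  | zero =>
    have hempty : {k ∈ DesL ρ | k < 0 + 1} = ∅ :=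
      filter_eq_empty_iff.2 fun k hk => by have := mem_Ioo.1 (mem_Ioo_of_mem_DesL hk); omega
    rw [hv.snd_eq_one hrv rfl, hempty, card_empty]
  | succ m ih =>
    have hij : ((⟨m, by omega⟩ : Fin n) : ℕ) + 1 = (⟨m + 1, hm⟩ : Fin n) := rfl
    rw [hv.snd_succ hrv hij, ih (by omega), card_filter_lt_add_one _ (m + 1)]
    simp only [if_congr (readLT_iff_mem_DesL hq hρ hij) rfl rfl]
    omega

section PartialSums

variable {α : List ℕ}

lemma strictMonoOn_sum_take (hα : ∀ x ∈ α, 0 < x) :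
    StrictMonoOn (fun k => (α.take k).sum) (Set.Iic α.length) := by
  refine strictMonoOn_Iic_of_lt_succ fun m hm => ?_
  rw [Order.succ_eq_add_one, List.sum_take_succ α m hm]
  exact Nat.lt_add_of_pos_right (hα _ (List.getElem_mem hm))

lemma psums_subset_Icc (hα : ∀ x ∈ α, 0 < x) : psums α ⊆ Icc 1 (α.sum - 1) := by
  intro z hz
  obtain ⟨j, hj, rfl⟩ := mem_image.1 hz
  have hS := strictMonoOn_sum_take hα
  have h0 := hS (a := 0) (b := j + 1) (by simp) (by simp at hj ⊢; omega) (by omega)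
  have hL := hS (a := j + 1) (b := α.length) (by simp at hj ⊢; omega) (by simp)
    (by simp at hj; omega)
  simp only [List.take_zero, List.sum_nil, List.take_length] at h0 hL
  exact mem_Icc.2 ⟨h0, by omega⟩

lemma card_filter_psums_lt (hα : ∀ x ∈ α, 0 < x) {i p : ℕ} (hi : i < α.length)
    (hlo : (α.take i).sum ≤ p) (hhi : p < (α.take (i + 1)).sum) :
    #{z ∈ psums α | z < p + 1} = i := by
  have hS := strictMonoOn_sum_take hα
  have hrange : {j ∈ range (α.length - 1) | (α.take (j + 1)).sum < p + 1} = range i := by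
    ext j
    simp only [mem_filter, mem_range]
    constructor
    · rintro ⟨hj, hjp⟩
      by_contra hji
      have := (hS.le_iff_le (a := i + 1) (b := j + 1) (by simp; omega) (by simp; omega)).2
        (by omega)
      omega
    · intro hji
      have := (hS.le_iff_le (a := j + 1) (b := i) (by simp; omega) (by simp; omega)).2 hji
      exact ⟨by omega, by omega⟩
  rw [psums, filter_image, card_image_of_injOn, hrange, card_range]
  intro a ha b hb hab
  simp only [mem_coe, mem_filter, mem_range] at ha hb
  exact Nat.succ_injective (hS.injOn (by simp; omega) (by simp; omega) hab)

end PartialSums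

theorem ReadTopEnum.fst_eq_one_add_card_psums {n : ℕ} {α : List ℕ} (hα : ∀ x ∈ α, 0 < x)
    {q : Fin n → ℕ × ℕ} (hq : ReadTopEnum q) (hrq : Set.range q = cdFinset α) (p : Fin n) :
    (q p).1 = 1 + #{z ∈ psums α | z < (p : ℕ) + 1} := by
  have hqp : q p ∈ cdFinset α := mem_coe.1 (hrq ▸ Set.mem_range_self p)
  obtain ⟨i, hi, h1, -, -⟩ := mem_cdFinset.1 hqp
  have hcount : #{c ∈ cdFinset α | ReadLT c (q p)} = p :=
    card_filter_rel_apply_eq_of_lt_iff (r := ReadLT) hq hrq p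
  have hlo : (α.take i).sum ≤ p := by
    rw [← hcount, ← card_cdFinset, ← filter_fst_le_cdFinset]
    refine card_le_card (monotone_filter_right _ fun c _ hc => ?_)
    simp only [ReadLT]
    omega
  have hhi : p < (α.take (i + 1)).sum := by
    rw [← hcount, ← card_cdFinset, ← filter_fst_le_cdFinset]
    refine card_lt_card ((ssubset_iff_of_subset ?_).2 ⟨q p, ?_, ?_⟩)
    · refine monotone_filter_right _ fun c _ hc => ?_
      simp only [ReadLT] at hc
      omega
    · exact mem_filter.2 ⟨hqp, by omega⟩
    · exact fun h => by simpa [ReadLT] using (mem_filter.1 h).2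
  rw [card_filter_psums_lt hα hi hlo hhi, h1, add_comm]

/-- For a composition `α` of `n`, with `T'_α` the standard extended tableau of
shape `α` filled top-to-bottom along columns left to right, and
`ρ = read(T'_α)`, the diagram `D_{α^c; read(T'_α)}` produced by the algorithm is
the transpose `{(i,j) : (j,i) ∈ cd(α)}` of the composition diagram of `α`. -/
theorem algorithm_diagram_of_extended_tableau {n : ℕ} (α : List ℕ)
    (hα : ∀ x ∈ α, 0 < x) (hsum : α.sum = n)
    (v q : Fin n → ℕ × ℕ)
    (hv : ColTopEnum v) (hrv : Set.range v = ↑(cdFinset α))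
    (hq : ReadTopEnum q) (hrq : Set.range q = ↑(cdFinset α))
    (ρ : Perm (Fin n)) (hρ : ∀ p : Fin n, v (ρ p) = q p) :
    Dalg (Finset.Icc 1 (n - 1) \ psums α) ρ =
      (cdFinset α).image fun p => (p.2, p.1) := by
  have hbox : ∀ p : Fin n,
      (1 + #{k ∈ DesL ρ | k < (ρ p : ℕ) + 1}, 1 + #{z ∈ psums α | z < (p : ℕ) + 1}) =
        Prod.swap (q p) := fun p => by
    rw [← hv.snd_eq_one_add_card_DesL hrv hq hρ, hρ,
      ← ReadTopEnum.fst_eq_one_add_card_psums hα hq hrq, Prod.swap]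
  have himage : univ.image q = cdFinset α := by
    rw [← coe_inj, coe_image, coe_univ, Set.image_univ, hrq]
  rw [Dalg, sdiff_sdiff_right_self, inf_of_le_right (hsum ▸ psums_subset_Icc hα), ← himage,
    image_image]
  exact congrArg (univ.image ·) (funext hbox)
end
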